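/- arXiv:1603.06181 — 2 statements merged into one kernel-verified Lean document; each statement's English description precedes it below -/
import Mathlib

section
/- Let T > 0 and ϖ ∈ W²,¹([0,T]). Then I_T(f;ϖ) = ∫₀ᵀ f(ϖ,ϖ′,ϖ″) dt is finite if and only if ϖ ∈ W²,²([0,T]). -/
/-! Apart from the term `(ξ²/2) ϖ″²`, the integrand is a continuous function of `(ϖ, ϖ′)`, which
are continuous on `[0,T]`; so the energy is finite exactly when `ϖ″²` is integrable. -/

open MeasureTheory Filter Topology Set

noncomputable section

/-- The Landau–Brazovskii integrand `f(x,y,z)`. -/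
def fLB (ξ τ γ : ℝ) (x y z : ℝ) : ℝ :=
  ξ ^ 2 / 2 * z ^ 2 - ξ ^ 2 * y ^ 2 + (ξ ^ 2 + τ) / 2 * x ^ 2 - γ / 6 * x ^ 3 + 1 / 24 * x ^ 4

/-- The Lagrangian `f_λ(x,y,z) = f(x,y,z) - λ·x`. -/
def fLag (ξ τ γ lam : ℝ) (x y z : ℝ) : ℝ := fLB ξ τ γ x y z - lam * x

/-- The energy `I_T(g;w) = ∫₀ᵀ g(w,w',w'')`. -/
def IT (g : ℝ → ℝ → ℝ → ℝ) (w : ℝ → ℝ) (T : ℝ) : ℝ :=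
  ∫ t in (0:ℝ)..T, g (w t) (deriv w t) (deriv (deriv w) t)

/-- The average energy `J_T(g;w) = I_T(g;w)/T`. -/
def JT (g : ℝ → ℝ → ℝ → ℝ) (w : ℝ → ℝ) (T : ℝ) : ℝ := IT g w T / T

/-- Membership in `W^{2,1}([a,b])`: `w` is twice differentiable on `[a,b]`
with integrable second derivative. -/
def MemW21 (a b : ℝ) (w : ℝ → ℝ) : Prop :=
  (∀ t ∈ Set.Icc a b, DifferentiableAt ℝ w t ∧ DifferentiableAt ℝ (deriv w) t) ∧
  IntervalIntegrable (fun t => deriv (deriv w) t) volume a b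

/-- Membership in `W^{2,2}([a,b])`: the second derivative is square integrable. -/
def MemW22 (a b : ℝ) (w : ℝ → ℝ) : Prop :=
  (∀ t ∈ Set.Icc a b, DifferentiableAt ℝ w t ∧ DifferentiableAt ℝ (deriv w) t) ∧
  IntervalIntegrable (fun t => (deriv (deriv w) t) ^ 2) volume a b

/-- The class `E = W^{2,1}_loc(ℝ⁺) ∩ W^{1,∞}(ℝ⁺)`. -/
def MemE (w : ℝ → ℝ) : Prop :=
  (∀ a b : ℝ, 0 ≤ a → a ≤ b → MemW21 a b w) ∧
  ∃ M : ℝ, ∀ t : ℝ, 0 ≤ t → |w t| ≤ M ∧ |deriv w t| ≤ M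

/-- The asymptotic mean `[w] = liminf_{T→∞} (1/T)∫₀ᵀ w`. -/
def meanVal (w : ℝ → ℝ) : ℝ := liminf (fun T : ℝ => (∫ t in (0:ℝ)..T, w t) / T) atTop

/-- The asymptotic average energy `liminf_{T→∞} J_T(g;w)`. -/
def avgE (g : ℝ → ℝ → ℝ → ℝ) (w : ℝ → ℝ) : ℝ := liminf (fun T : ℝ => JT g w T) atTop

/-- Minimal average energy `ψ_g` of the unconstrained problem `ℙ(g)`. -/
def psiU (g : ℝ → ℝ → ℝ → ℝ) : ℝ := sInf {c : ℝ | ∃ w, MemE w ∧ avgE g w = c}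

/-- Minimal average energy `ψ_g(a)` of the constrained problem `ℙ(g;a)`. -/
def psiC (g : ℝ → ℝ → ℝ → ℝ) (a : ℝ) : ℝ :=
  sInf {c : ℝ | ∃ w, MemE w ∧ meanVal w = a ∧ avgE g w = c}

/-- Minimizers of the unconstrained problem `ℙ(g)`. -/
def ThetaU (g : ℝ → ℝ → ℝ → ℝ) : Set (ℝ → ℝ) := {w | MemE w ∧ avgE g w = psiU g}

/-- Minimizers of the constrained problem `ℙ(g;a)`. -/
def ThetaC (g : ℝ → ℝ → ℝ → ℝ) (a : ℝ) : Set (ℝ → ℝ) :=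
  {w | MemE w ∧ meanVal w = a ∧ avgE g w = psiC g a}

/-- The minimal average energy `ζ_T(g;x,y)` over `[0,T]` with prescribed boundary data. -/
def zetaT (g : ℝ → ℝ → ℝ → ℝ) (T : ℝ) (x y : ℝ × ℝ) : ℝ :=
  sInf {c : ℝ | ∃ w, MemW21 0 T w ∧ (w 0, deriv w 0) = x ∧ (w T, deriv w T) = y ∧
    JT g w T = c}

/-- `w` has minimal energy over every compact interval, with its own boundary data. -/
def CompactMinimal (g : ℝ → ℝ → ℝ → ℝ) (w : ℝ → ℝ) : Prop :=
  ∀ T₁ T₂ : ℝ, 0 ≤ T₁ → T₁ < T₂ →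
    (∫ t in T₁..T₂, g (w t) (deriv w t) (deriv (deriv w) t)) / (T₂ - T₁) =
      zetaT g (T₂ - T₁) (w T₁, deriv w T₁) (w T₂, deriv w T₂)

/-- Strongly optimal solutions of `ℙ(g)`. -/
def StronglyOptimal (g : ℝ → ℝ → ℝ → ℝ) (w : ℝ → ℝ) : Prop :=
  MemE w ∧ CompactMinimal g w ∧ avgE g w = psiU g

theorem intervalIntegrable_const_mul_add_iff {μ : Measure ℝ} {a b c : ℝ} {f g : ℝ → ℝ}
    (hc : c ≠ 0) (hg : IntervalIntegrable g μ a b) :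
    IntervalIntegrable (fun t => c * f t + g t) μ a b ↔ IntervalIntegrable f μ a b := by
  simp only [intervalIntegrable_iff, IntegrableOn] at hg ⊢
  rw [integrable_add_iff_integrable_left' hg, integrable_const_mul_iff (isUnit_iff_ne_zero.2 hc)]

theorem fLB_eq_add (ξ τ γ x y z : ℝ) :
    fLB ξ τ γ x y z = ξ ^ 2 / 2 * z ^ 2 + fLB ξ τ γ x y 0 := by
  simp only [fLB]
  ring

theorem intervalIntegrable_fLB_zero {ξ τ γ a b : ℝ} {u v : ℝ → ℝ} (hab : a ≤ b)
    (hu : ContinuousOn u (Icc a b)) (hv : ContinuousOn v (Icc a b)) :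
    IntervalIntegrable (fun t => fLB ξ τ γ (u t) (v t) 0) volume a b := by
  apply ContinuousOn.intervalIntegrable
  rw [uIcc_of_le hab]
  unfold fLB
  fun_prop

/-- For `ϖ ∈ W^{2,1}([0,T])`, the energy `I_T(f;ϖ)` is finite (the integrand is
integrable) iff `ϖ ∈ W^{2,2}([0,T])`. -/
theorem energy_finite_iff_W22 (ξ τ γ : ℝ) (hξ : 0 < ξ) (T : ℝ) (hT : 0 < T)
    (w : ℝ → ℝ) (hw : MemW21 0 T w) :
    IntervalIntegrable (fun t => fLB ξ τ γ (w t) (deriv w t) (deriv (deriv w) t))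
      volume 0 T ↔ MemW22 0 T w := by
  obtain ⟨hdiff, -⟩ := hw
  have hlow : IntervalIntegrable (fun t => fLB ξ τ γ (w t) (deriv w t) 0) volume 0 T :=
    intervalIntegrable_fLB_zero hT.le
      (fun t ht => (hdiff t ht).1.continuousAt.continuousWithinAt)
      (fun t ht => (hdiff t ht).2.continuousAt.continuousWithinAt)
  simp only [fLB_eq_add ξ τ γ _ _ (deriv (deriv w) _)]
  rw [intervalIntegrable_const_mul_add_iff (by positivity) hlow, MemW22]
  exact ⟨fun h => ⟨hdiff, h⟩, And.right⟩

end
end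

section
/- Suppose ψ_f(0) < m_f = inf{f(t,0,0) : t ∈ ℝ}. Let θ_n → 0 and let ϖ̃_n be periodic optimal solutions of ℙ(f;θ_n) with minimal positive periods τ_n, and suppose that ϖ̃_n, ϖ̃_n′ and ϖ̃_n″ converge uniformly on compact sets to ϖ̃, ϖ̃′ and ϖ̃″ respectively. Then τ_n does not converge to 0. -/
open MeasureTheory Filter Topology Set

noncomputable section

/-!
Pick a competitor `w₀` of mean `0` with average energy `c₀ < m_f`. Its shift `w₀ + θ` has mean `θ`,
and `f(x+θ,y,z) - f(x,y,z) = f(x+θ,0,0) - f(x,0,0)` is `O(|θ|)` for bounded `x`, so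
`ψ_f(θ) ≤ c₀ + K|θ|`. On the other hand `ϖ̃ₙ` has a critical point in each period (Rolle), so if
`τₙ → 0` the locally uniform convergence of `ϖ̃ₙ′` forces `ϖ̃ₙ′ → 0` uniformly on `[0, τₙ]`. Since
`f(x,y,z) ≥ m_f - ξ²y²`, the average energy over a period, which is `ψ_f(θₙ)`, is at least
`m_f - o(1)`, contradicting `ψ_f(θₙ) ≤ c₀ + o(1)`.
-/

open Filter Set MeasureTheory intervalIntegral

section Liminf

variable {ι : Type*} {l : Filter ι} {u v : ι → ℝ}

/- On `ℝ`, `liminf u l = 0` when `u` is not cobounded below; both lemmas cover that case. -/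

theorem Real.le_liminf_of_eventually_le_of_nonpos {c : ℝ} (hc : c ≤ 0)
    (h : ∀ᶠ i in l, c ≤ u i) : c ≤ liminf u l := by
  by_cases hco : l.IsCoboundedUnder (· ≥ ·) u
  · exact le_liminf_of_le hco h
  · rw [Real.liminf_of_not_isCoboundedUnder hco]
    exact hc

theorem Real.liminf_le_liminf_add_of_abs_sub_le [l.NeBot] {D : ℝ}
    (huv : ∀ᶠ i in l, |u i - v i| ≤ D) (hv : l.IsBoundedUnder (· ≥ ·) v) :
    liminf u l ≤ liminf v l + D := by
  have hD : 0 ≤ D := let ⟨_, hi⟩ := huv.exists; (abs_nonneg _).trans hi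
  have shift : ∀ {p q : ι → ℝ} {a : ℝ}, (∀ᶠ i in l, |p i - q i| ≤ D) →
      (∀ᶠ i in l, a ≤ q i) → ∀ᶠ i in l, a - D ≤ p i := fun hpq ha => by
    filter_upwards [hpq, ha] with i h1 h2
    linarith [abs_le.mp h1]
  have huv' : ∀ᶠ i in l, |v i - u i| ≤ D := by simpa only [abs_sub_comm] using huv
  by_cases hco : l.IsCoboundedUnder (· ≥ ·) v
  · obtain ⟨b, hb⟩ := hv
    refine liminf_le_of_le (isBoundedUnder_of_eventually_ge (shift huv hb)) fun a ha => ?_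
    linarith [le_liminf_of_le hco (shift huv' ha)]
  · have hcou : ¬ l.IsCoboundedUnder (· ≥ ·) u := by
      rintro ⟨b, hb⟩
      exact hco ⟨b + D, fun a ha => by linarith [hb _ (shift huv ha)]⟩
    rw [Real.liminf_of_not_isCoboundedUnder hco, Real.liminf_of_not_isCoboundedUnder hcou]
    linarith

end Liminf

section Integral

variable {f g d : ℝ → ℝ} {a b c C : ℝ}

/- Both lemmas also cover a non-integrable `f`, for which `∫ f = 0`. -/

theorem le_integral_of_forall_le_of_nonpos (hab : a ≤ b) (hg : IntervalIntegrable g volume a b)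
    (hgf : ∀ x ∈ Icc a b, g x ≤ f x) (hcg : c ≤ ∫ x in a..b, g x) (hc : c ≤ 0) :
    c ≤ ∫ x in a..b, f x := by
  by_cases hf : IntervalIntegrable f volume a b
  · exact hcg.trans (integral_mono_on hab hg hf hgf)
  · rwa [integral_undef hf]

theorem abs_integral_add_sub_integral_le (hab : a ≤ b) (hd : IntervalIntegrable d volume a b)
    (hdC : ∀ x ∈ Icc a b, |d x| ≤ C) :
    |(∫ x in a..b, f x + d x) - ∫ x in a..b, f x| ≤ C * (b - a) := by
  by_cases hf : IntervalIntegrable f volume a b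
  · rw [integral_add hf hd, add_sub_cancel_left, ← abs_of_nonneg (sub_nonneg.2 hab)]
    refine (Real.norm_eq_abs _).symm.trans_le (norm_integral_le_of_norm_le_const fun x hx => ?_)
    rw [uIoc_of_le hab] at hx
    exact hdC x (Ioc_subset_Icc_self hx)
  · have hfd : ¬ IntervalIntegrable (fun x => f x + d x) volume a b := fun h =>
      hf (by simpa using h.sub hd)
    rw [integral_undef hf, integral_undef hfd, sub_zero, abs_zero]
    exact mul_nonneg ((abs_nonneg _).trans (hdC a (left_mem_Icc.2 hab))) (sub_nonneg.2 hab)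

end Integral

theorem TendstoLocallyUniformlyOn.exists_tendsto_zero_forall_abs_le {F : ℕ → ℝ → ℝ} {G : ℝ → ℝ}
    {T c : ℕ → ℝ} (hF : TendstoLocallyUniformlyOn F G atTop (Ici 0))
    (hFc : ∀ n, ContinuousOn (F n) (Ici 0)) (hT : Tendsto T atTop (𝓝 0))
    (hc : ∀ n, c n ∈ Icc 0 (T n)) (hFc0 : ∀ n, F n (c n) = 0) :
    ∃ δ : ℕ → ℝ, Tendsto δ atTop (𝓝 0) ∧ ∀ n, ∀ t ∈ Icc 0 (T n), |F n t| ≤ δ n := by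
  have hmax : ∀ n, ∃ s ∈ Icc 0 (T n), IsMaxOn (fun t => |F n t|) (Icc 0 (T n)) s := fun n =>
    isCompact_Icc.exists_isMaxOn ⟨c n, hc n⟩ ((hFc n).mono Icc_subset_Ici_self).abs
  choose s hs hsmax using hmax
  have hcomp : ∀ p : ℕ → ℝ, (∀ n, p n ∈ Icc 0 (T n)) →
      Tendsto (fun n => F n (p n)) atTop (𝓝 (G 0)) := fun p hp =>
    hF.tendsto_comp (hF.continuousOn (Frequently.of_forall hFc) 0 self_mem_Ici) self_mem_Ici
      (tendsto_nhdsWithin_iff.2 ⟨squeeze_zero (fun n => (hp n).1) (fun n => (hp n).2) hT,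
        Eventually.of_forall fun n => (hp n).1⟩)
  have hG : G 0 = 0 :=
    tendsto_nhds_unique (hcomp c hc) (by simpa only [hFc0] using tendsto_const_nhds)
  exact ⟨fun n => |F n (s n)|, by simpa [hG] using (hcomp s hs).abs, fun n t ht => hsmax n ht⟩

namespace MemW21

variable {a b : ℝ} {w : ℝ → ℝ}

theorem continuousOn (hw : MemW21 a b w) : ContinuousOn w (Icc a b) :=
  fun t ht => (hw.1 t ht).1.continuousAt.continuousWithinAt

theorem continuousOn_deriv (hw : MemW21 a b w) : ContinuousOn (deriv w) (Icc a b) :=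
  fun t ht => (hw.1 t ht).2.continuousAt.continuousWithinAt

theorem intervalIntegrable_deriv_deriv_mul_add_sq (hab : a ≤ b) (hw : MemW21 a b w) :
    IntervalIntegrable (fun t => deriv (deriv w) t * w t + deriv w t ^ 2) volume a b :=
  (hw.2.mul_continuousOn (by rw [uIcc_of_le hab]; exact hw.continuousOn)).add
    ((hw.continuousOn_deriv.pow 2).intervalIntegrable_of_Icc hab)

theorem integral_deriv_deriv_mul_add_sq (hab : a ≤ b) (hw : MemW21 a b w) :
    ∫ t in a..b, (deriv (deriv w) t * w t + deriv w t ^ 2) =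
      deriv w b * w b - deriv w a * w a := by
  refine integral_eq_sub_of_hasDerivAt (f := fun t => deriv w t * w t) (fun t ht => ?_)
    (hw.intervalIntegrable_deriv_deriv_mul_add_sq hab)
  rw [uIcc_of_le hab] at ht
  exact ((hw.1 t ht).2.hasDerivAt.mul (hw.1 t ht).1.hasDerivAt).congr_deriv (by ring)

end MemW21

namespace MemE

variable {w : ℝ → ℝ}

theorem memW21 (hw : MemE w) {T : ℝ} (hT : 0 ≤ T) : MemW21 0 T w :=
  hw.1 0 T le_rfl hT

theorem continuousOn (hw : MemE w) : ContinuousOn w (Ici 0) := fun t ht =>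
  ((hw.1 t t ht le_rfl).1 t ⟨le_rfl, le_rfl⟩).1.continuousAt.continuousWithinAt

theorem continuousOn_deriv (hw : MemE w) : ContinuousOn (deriv w) (Ici 0) := fun t ht =>
  ((hw.1 t t ht le_rfl).1 t ⟨le_rfl, le_rfl⟩).2.continuousAt.continuousWithinAt

theorem add_const (hw : MemE w) (ϑ : ℝ) : MemE (fun t => w t + ϑ) := by
  have hd : deriv (fun t => w t + ϑ) = deriv w := funext fun t => deriv_add_const ϑ
  obtain ⟨hW, M, hM⟩ := hw
  refine ⟨fun a b ha hab => ?_, M + |ϑ|, fun t ht => ?_⟩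
  · obtain ⟨hdiff, hint⟩ := hW a b ha hab
    exact ⟨fun t ht => ⟨(hdiff t ht).1.add_const ϑ, hd ▸ (hdiff t ht).2⟩, hd ▸ hint⟩
  · rw [hd]
    exact ⟨(abs_add_le _ _).trans (by linarith [(hM t ht).1]),
      by linarith [(hM t ht).2, abs_nonneg ϑ]⟩

theorem meanVal_add_const (hw : MemE w) (ϑ : ℝ) :
    meanVal (fun t => w t + ϑ) = meanVal w + ϑ := by
  obtain ⟨M, hM⟩ := hw.2
  have hmean : ∀ᶠ T in atTop,
      (∫ t in (0 : ℝ)..T, w t + ϑ) / T = (∫ t in (0 : ℝ)..T, w t) / T + ϑ := by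
    filter_upwards [eventually_gt_atTop 0] with T hT
    rw [integral_add ((hw.memW21 hT.le).continuousOn.intervalIntegrable_of_Icc hT.le)
      intervalIntegrable_const, intervalIntegral.integral_const, smul_eq_mul]
    field_simp
    ring
  have hbdd : ∀ᶠ T in atTop, |(∫ t in (0 : ℝ)..T, w t) / T| ≤ M := by
    filter_upwards [eventually_gt_atTop 0] with T hT
    rw [abs_div, abs_of_pos hT, div_le_iff₀ hT]
    simpa [abs_of_pos hT] using norm_integral_le_of_norm_le_const (a := 0) (b := T) (f := w)
      fun t ht => (hM t (by rw [uIoc_of_le hT.le] at ht; exact ht.1.le)).1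
  unfold meanVal
  rw [liminf_congr hmean]
  exact liminf_add_const atTop _ ϑ
    (isCoboundedUnder_ge_of_eventually_le atTop (hbdd.mono fun T h => (abs_le.mp h).2))
    (isBoundedUnder_of_eventually_ge (hbdd.mono fun T h => (abs_le.mp h).1))

end MemE

theorem memE_const (c : ℝ) : MemE (fun _ => c) :=
  ⟨fun a b _ _ => ⟨fun t _ => by simp, by simp⟩, |c|, fun t _ => by simp⟩

theorem meanVal_zero : meanVal (fun _ => 0) = 0 := by
  simp [meanVal]

theorem exists_tendsto_zero_forall_abs_deriv_le_of_periodic {u : ℕ → ℝ → ℝ} {v : ℝ → ℝ}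
    {T : ℕ → ℝ} (hu : ∀ n, MemE (u n)) (hTpos : ∀ n, 0 < T n)
    (hper : ∀ n, Function.Periodic (u n) (T n)) (hT : Tendsto T atTop (𝓝 0))
    (hconv : TendstoLocallyUniformly (fun n => deriv (u n)) (deriv v) atTop) :
    ∃ δ : ℕ → ℝ, Tendsto δ atTop (𝓝 0) ∧ ∀ n, ∀ t ∈ Icc 0 (T n), |deriv (u n) t| ≤ δ n := by
  have hrolle : ∀ n, ∃ c ∈ Ioo 0 (T n), deriv (u n) c = 0 := fun n =>
    exists_deriv_eq_zero (hTpos n) ((hu n).continuousOn.mono Icc_subset_Ici_self)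
      (by simpa using (hper n 0).symm)
  choose c hc hc0 using hrolle
  exact hconv.tendstoLocallyUniformlyOn.exists_tendsto_zero_forall_abs_le
    (fun n => (hu n).continuousOn_deriv) hT (fun n => Ioo_subset_Icc_self (hc n)) hc0

section LandauBrazovskii

variable {ξ τ γ : ℝ}

def quarticPart (τ γ x : ℝ) : ℝ := τ / 2 * x ^ 2 - γ / 6 * x ^ 3 + 1 / 24 * x ^ 4

theorem exists_nonpos_forall_le_quarticPart (τ γ : ℝ) : ∃ m ≤ 0, ∀ x, m ≤ quarticPart τ γ x := by
  refine ⟨-(12 * (γ ^ 2 / 3 + |τ| / 2) ^ 2), by nlinarith [sq_nonneg (γ ^ 2 / 3 + |τ| / 2)],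
    fun x => ?_⟩
  unfold quarticPart
  nlinarith [sq_nonneg (x ^ 2 - 4 * γ * x), sq_nonneg (x ^ 2 - 24 * (γ ^ 2 / 3 + |τ| / 2)),
    neg_abs_le τ, mul_nonneg (abs_nonneg τ) (sq_nonneg x)]

/- Along a curve `w` the last term is `-ξ² (w' w)'`, so it integrates to a boundary term. -/
theorem fLB_eq_quarticPart_add (ξ τ γ x y z : ℝ) :
    fLB ξ τ γ x y z = quarticPart τ γ x + ξ ^ 2 / 2 * (z + x) ^ 2 - ξ ^ 2 * (z * x + y ^ 2) := by
  unfold fLB quarticPart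
  ring

theorem fLB_zero_zero_sub_le (ξ τ γ x y z : ℝ) :
    fLB ξ τ γ x 0 0 - ξ ^ 2 * y ^ 2 ≤ fLB ξ τ γ x y z := by
  unfold fLB
  nlinarith [sq_nonneg (ξ * z)]

theorem fLB_add_sub_fLB (ξ τ γ x ϑ y z : ℝ) :
    fLB ξ τ γ (x + ϑ) y z - fLB ξ τ γ x y z = fLB ξ τ γ (x + ϑ) 0 0 - fLB ξ τ γ x 0 0 := by
  unfold fLB
  ring

theorem bddBelow_range_fLB_zero_zero : BddBelow (range fun x => fLB ξ τ γ x 0 0) := by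
  obtain ⟨m, -, hm⟩ := exists_nonpos_forall_le_quarticPart τ γ
  refine ⟨m, forall_mem_range.2 fun x => ?_⟩
  have := fLB_eq_quarticPart_add ξ τ γ x 0 0
  nlinarith [hm x, sq_nonneg (ξ * x)]

theorem sInf_range_fLB_zero_zero_nonpos : sInf (range fun x => fLB ξ τ γ x 0 0) ≤ 0 :=
  (csInf_le bddBelow_range_fLB_zero_zero (mem_range_self 0)).trans_eq (by simp [fLB])

theorem sub_le_JT_fLB_of_abs_deriv_le {w : ℝ → ℝ} {T δ : ℝ} (hT : 0 < T)
    (hδ : ∀ t ∈ Icc 0 T, |deriv w t| ≤ δ) :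
    sInf (range fun x => fLB ξ τ γ x 0 0) - ξ ^ 2 * δ ^ 2 ≤ JT (fLB ξ τ γ) w T := by
  have hmf := sInf_range_fLB_zero_zero_nonpos (ξ := ξ) (τ := τ) (γ := γ)
  rw [JT, le_div_iff₀ hT, IT]
  refine le_integral_of_forall_le_of_nonpos hT.le
    (g := fun _ => sInf (range fun x => fLB ξ τ γ x 0 0) - ξ ^ 2 * δ ^ 2)
    intervalIntegrable_const (fun t ht => ?_)
    (by rw [intervalIntegral.integral_const, smul_eq_mul, sub_zero, mul_comm])
    (mul_nonpos_of_nonpos_of_nonneg (by nlinarith [sq_nonneg (ξ * δ)]) hT.le)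
  have hsq : deriv w t ^ 2 ≤ δ ^ 2 := by
    simpa only [sq_abs] using pow_le_pow_left₀ (abs_nonneg _) (hδ t ht) 2
  have hmf_le : sInf (range fun x => fLB ξ τ γ x 0 0) ≤ fLB ξ τ γ (w t) 0 0 :=
    csInf_le bddBelow_range_fLB_zero_zero (mem_range_self _)
  nlinarith [fLB_zero_zero_sub_le ξ τ γ (w t) (deriv w t) (deriv (deriv w) t), sq_nonneg ξ]

theorem le_IT_fLB {w : ℝ → ℝ} {T m M : ℝ} (hm0 : m ≤ 0) (hm : ∀ x, m ≤ quarticPart τ γ x)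
    (hT : 0 ≤ T) (hw : MemW21 0 T w) (h0 : |deriv w 0 * w 0| ≤ M)
    (hT' : |deriv w T * w T| ≤ M) :
    m * T - 2 * ξ ^ 2 * M ≤ IT (fLB ξ τ γ) w T := by
  have hM : 0 ≤ M := (abs_nonneg _).trans h0
  have hint := hw.intervalIntegrable_deriv_deriv_mul_add_sq hT
  refine le_integral_of_forall_le_of_nonpos hT
    (g := fun t => m - ξ ^ 2 * (deriv (deriv w) t * w t + deriv w t ^ 2))
    (intervalIntegrable_const.sub (hint.const_mul _)) (fun t _ => ?_) ?_
    (by nlinarith [mul_nonneg (sq_nonneg ξ) hM])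
  · rw [fLB_eq_quarticPart_add]
    nlinarith [hm (w t), mul_nonneg (sq_nonneg ξ) (sq_nonneg (deriv (deriv w) t + w t))]
  · rw [integral_sub intervalIntegrable_const (hint.const_mul _),
      intervalIntegral.integral_const_mul, hw.integral_deriv_deriv_mul_add_sq hT,
      intervalIntegral.integral_const, smul_eq_mul]
    nlinarith [abs_le.mp h0, abs_le.mp hT', sq_nonneg ξ]

theorem MemE.eventually_le_JT_fLB {w : ℝ → ℝ} {m : ℝ} (hm0 : m ≤ 0)
    (hm : ∀ x, m ≤ quarticPart τ γ x) (hw : MemE w) :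
    ∀ᶠ T in atTop, m - 1 ≤ JT (fLB ξ τ γ) w T := by
  obtain ⟨M, hM⟩ := hw.2
  have hprod : ∀ t, 0 ≤ t → |deriv w t * w t| ≤ M ^ 2 := fun t ht => by
    rw [abs_mul, sq]
    exact mul_le_mul (hM t ht).2 (hM t ht).1 (abs_nonneg _) ((abs_nonneg _).trans (hM t ht).2)
  filter_upwards [eventually_ge_atTop (max 1 (2 * ξ ^ 2 * M ^ 2))] with T hT
  have hT1 : 1 ≤ T := le_of_max_le_left hT
  have hTM : 2 * ξ ^ 2 * M ^ 2 ≤ T := le_of_max_le_right hT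
  rw [JT, le_div_iff₀ (by linarith)]
  have := le_IT_fLB (ξ := ξ) hm0 hm (by linarith) (hw.memW21 (by linarith))
    (hprod 0 le_rfl) (hprod T (by linarith))
  nlinarith

theorem MemE.le_avgE_fLB {w : ℝ → ℝ} {m : ℝ} (hm0 : m ≤ 0) (hm : ∀ x, m ≤ quarticPart τ γ x)
    (hw : MemE w) : m - 1 ≤ avgE (fLB ξ τ γ) w :=
  Real.le_liminf_of_eventually_le_of_nonpos (by linarith) (hw.eventually_le_JT_fLB hm0 hm)

theorem psiC_fLB_le_avgE {w : ℝ → ℝ} {a : ℝ} (hw : MemE w) (ha : meanVal w = a) :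
    psiC (fLB ξ τ γ) a ≤ avgE (fLB ξ τ γ) w := by
  obtain ⟨m, hm0, hm⟩ := exists_nonpos_forall_le_quarticPart τ γ
  exact csInf_le ⟨m - 1, fun _ ⟨v, hv, _, hc⟩ => hc ▸ hv.le_avgE_fLB hm0 hm⟩ ⟨w, hw, ha, rfl⟩

theorem MemE.exists_avgE_fLB_add_const_le {w : ℝ → ℝ} (hw : MemE w) :
    ∃ K : ℝ, ∀ ϑ, |ϑ| ≤ 1 →
      avgE (fLB ξ τ γ) (fun t => w t + ϑ) ≤ avgE (fLB ξ τ γ) w + K * |ϑ| := by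
  obtain ⟨M, hM⟩ := hw.2
  have hsmooth : ContDiff ℝ 1 fun x => fLB ξ τ γ x 0 0 := by unfold fLB; fun_prop
  obtain ⟨K, hK⟩ := hsmooth.locallyLipschitz.locallyLipschitzOn.exists_lipschitzOnWith_of_compact
    (isCompact_Icc (a := -(M + 1)) (b := M + 1))
  refine ⟨K, fun ϑ hϑ => ?_⟩
  set d : ℝ → ℝ := fun t => fLB ξ τ γ (w t + ϑ) 0 0 - fLB ξ τ γ (w t) 0 0
  have hd : ∀ t, 0 ≤ t → |d t| ≤ K * |ϑ| := fun t ht => by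
    have hwt := abs_le.mp (hM t ht).1
    have hϑ' := abs_le.mp hϑ
    simpa [d, Real.dist_eq] using hK.dist_le_mul (w t + ϑ) ⟨by linarith, by linarith⟩ (w t)
      ⟨by linarith, by linarith⟩
  have hJT : ∀ᶠ T in atTop,
      |JT (fLB ξ τ γ) (fun t => w t + ϑ) T - JT (fLB ξ τ γ) w T| ≤ K * |ϑ| := by
    filter_upwards [eventually_gt_atTop 0] with T hT
    have hIT : IT (fLB ξ τ γ) (fun t => w t + ϑ) T = ∫ t in (0 : ℝ)..T,
        fLB ξ τ γ (w t) (deriv w t) (deriv (deriv w) t) + d t := by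
      have hder : deriv (fun t => w t + ϑ) = deriv w := funext fun t => deriv_add_const ϑ
      simp only [IT, hder]
      congr 1 with t
      linear_combination fLB_add_sub_fLB ξ τ γ (w t) ϑ (deriv w t) (deriv (deriv w) t)
    have hdint : IntervalIntegrable d volume 0 T := by
      refine ContinuousOn.intervalIntegrable_of_Icc hT.le ?_
      have hc : Continuous fun x => fLB ξ τ γ (x + ϑ) 0 0 - fLB ξ τ γ x 0 0 := by
        unfold fLB; fun_prop
      exact hc.comp_continuousOn (hw.memW21 hT.le).continuousOn
    rw [JT, JT, ← sub_div, abs_div, abs_of_pos hT, div_le_iff₀ hT, hIT, IT]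
    simpa only [sub_zero] using abs_integral_add_sub_integral_le hT.le hdint fun t ht => hd t ht.1
  obtain ⟨m, hm0, hm⟩ := exists_nonpos_forall_le_quarticPart τ γ
  exact Real.liminf_le_liminf_add_of_abs_sub_le hJT
    (isBoundedUnder_of_eventually_ge (hw.eventually_le_JT_fLB hm0 hm))

theorem MemE.exists_psiC_fLB_le_add {w : ℝ → ℝ} (hw : MemE w) (h0 : meanVal w = 0) :
    ∃ K : ℝ, ∀ ϑ, |ϑ| ≤ 1 → psiC (fLB ξ τ γ) ϑ ≤ avgE (fLB ξ τ γ) w + K * |ϑ| := by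
  obtain ⟨K, hK⟩ := hw.exists_avgE_fLB_add_const_le (ξ := ξ) (τ := τ) (γ := γ)
  refine ⟨K, fun ϑ hϑ => (psiC_fLB_le_avgE (hw.add_const ϑ) ?_).trans (hK ϑ hϑ)⟩
  rw [hw.meanVal_add_const, h0, zero_add]

end LandauBrazovskii

theorem periods_not_tendsto_zero_general (ξ τ γ : ℝ)
    (hlt : psiC (fLB ξ τ γ) 0 < sInf (Set.range fun t : ℝ => fLB ξ τ γ t 0 0))
    (θ : ℕ → ℝ) (hθ : Tendsto θ atTop (nhds 0))
    (w : ℕ → ℝ → ℝ) (τp : ℕ → ℝ) (wl : ℝ → ℝ)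
    (hw : ∀ n, w n ∈ ThetaC (fLB ξ τ γ) (θ n))
    (hper : ∀ n, 0 < τp n ∧ Function.Periodic (w n) (τp n) ∧
      ∀ p : ℝ, 0 < p → Function.Periodic (w n) p → τp n ≤ p)
    (henergy : ∀ n, (∫ s in (0:ℝ)..(τp n),
        fLB ξ τ γ (w n s) (deriv (w n) s) (deriv (deriv (w n)) s)) / τp n =
      psiC (fLB ξ τ γ) (θ n))
    (hconv' : TendstoLocallyUniformly (fun n => deriv (w n)) (deriv wl) atTop) :
    ¬ Tendsto τp atTop (nhds 0) := by
  intro hτp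
  set mf := sInf (Set.range fun t : ℝ => fLB ξ τ γ t 0 0)
  obtain ⟨_, ⟨w₀, hw₀, hw₀0, rfl⟩, hw₀mf⟩ := exists_lt_of_csInf_lt
    (s := {c | ∃ v, MemE v ∧ meanVal v = 0 ∧ avgE (fLB ξ τ γ) v = c})
    ⟨_, fun _ => 0, memE_const 0, meanVal_zero, rfl⟩ hlt
  obtain ⟨K, hK⟩ := hw₀.exists_psiC_fLB_le_add (ξ := ξ) (τ := τ) (γ := γ) hw₀0
  obtain ⟨δ, hδ, hδw⟩ := exists_tendsto_zero_forall_abs_deriv_le_of_periodic (fun n => (hw n).1)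
    (fun n => (hper n).1) (fun n => (hper n).2.1) hτp hconv'
  have hlower : ∀ n, mf - ξ ^ 2 * δ n ^ 2 ≤ psiC (fLB ξ τ γ) (θ n) := fun n =>
    (sub_le_JT_fLB_of_abs_deriv_le (hper n).1 (hδw n)).trans_eq (henergy n)
  have hupper : ∀ᶠ n in atTop, psiC (fLB ξ τ γ) (θ n) ≤ avgE (fLB ξ τ γ) w₀ + K * |θ n| :=
    (hθ.abs.eventually (ge_mem_nhds (by simp : |(0 : ℝ)| < 1))).mono fun n hn => hK _ hn
  have hlower_lim : Tendsto (fun n => mf - ξ ^ 2 * δ n ^ 2) atTop (𝓝 mf) := by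
    simpa using tendsto_const_nhds.sub ((hδ.pow 2).const_mul (ξ ^ 2))
  have hupper_lim : Tendsto (fun n => avgE (fLB ξ τ γ) w₀ + K * |θ n|) atTop
      (𝓝 (avgE (fLB ξ τ γ) w₀)) := by
    simpa using tendsto_const_nhds.add (hθ.abs.const_mul K)
  obtain ⟨c, hc_upper, hc_lower⟩ := exists_between hw₀mf
  obtain ⟨n, hn_lower, hn_upper, hn_upper_lim⟩ :=
    ((hlower_lim.eventually (lt_mem_nhds hc_lower)).and
      (hupper.and (hupper_lim.eventually (gt_mem_nhds hc_upper)))).exists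
  linarith [hlower n]

/-- If `ψ_f(0) < m_f`, the minimal periods of periodic optimal solutions of `ℙ(f;θ_n)`
with `θ_n → 0`, converging in `C²` on compacts, do not tend to `0`. -/
theorem periods_not_tendsto_zero (ξ τ γ : ℝ) (hξ : 0 < ξ)
    (hlt : psiC (fLB ξ τ γ) 0 < sInf (Set.range fun t : ℝ => fLB ξ τ γ t 0 0))
    (θ : ℕ → ℝ) (hθ : Tendsto θ atTop (nhds 0))
    (w : ℕ → ℝ → ℝ) (τp : ℕ → ℝ) (wl : ℝ → ℝ)
    (hw : ∀ n, w n ∈ ThetaC (fLB ξ τ γ) (θ n))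
    (hper : ∀ n, 0 < τp n ∧ Function.Periodic (w n) (τp n) ∧
      ∀ p : ℝ, 0 < p → Function.Periodic (w n) p → τp n ≤ p)
    (hmean : ∀ n, (∫ s in (0:ℝ)..(τp n), w n s) / τp n = θ n)
    (henergy : ∀ n, (∫ s in (0:ℝ)..(τp n),
        fLB ξ τ γ (w n s) (deriv (w n) s) (deriv (deriv (w n)) s)) / τp n =
      psiC (fLB ξ τ γ) (θ n))
    (hconv : TendstoLocallyUniformly w wl atTop)
    (hconv' : TendstoLocallyUniformly (fun n => deriv (w n)) (deriv wl) atTop)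
    (hconv'' : TendstoLocallyUniformly (fun n => deriv (deriv (w n))) (deriv (deriv wl))
      atTop) :
    ¬ Tendsto τp atTop (nhds 0) :=
  periods_not_tendsto_zero_general ξ τ γ hlt θ hθ w τp wl hw hper henergy hconv'
end
end
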